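/- Let M be a generalized Eulerian A_n(K)-module. Then H_1(X_n; M) (the kernel of multiplication by X_n on M(−1)) and H_0(X_n; M) = M/X_nM are generalized Eulerian A_{n−1}(K)-modules. -/

import Mathlib

/-! ### The Weyl algebra `A_n(K)` as a quotient of the free algebra. -/

/-- The defining relations of the `n`-th Weyl algebra: the `X_i` commute, the `∂_i` commute,
and `∂_i X_j = X_j ∂_i + δ_{ij}`. -/
inductive WeylRel (K : Type) [Field K] (n : ℕ) :
    FreeAlgebra K (Fin n ⊕ Fin n) → FreeAlgebra K (Fin n ⊕ Fin n) → Prop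
  | xx (i j : Fin n) : WeylRel K n
      (FreeAlgebra.ι K (Sum.inl i) * FreeAlgebra.ι K (Sum.inl j))
      (FreeAlgebra.ι K (Sum.inl j) * FreeAlgebra.ι K (Sum.inl i))
  | dd (i j : Fin n) : WeylRel K n
      (FreeAlgebra.ι K (Sum.inr i) * FreeAlgebra.ι K (Sum.inr j))
      (FreeAlgebra.ι K (Sum.inr j) * FreeAlgebra.ι K (Sum.inr i))
  | dx (i j : Fin n) : WeylRel K n
      (FreeAlgebra.ι K (Sum.inr i) * FreeAlgebra.ι K (Sum.inl j))
      (FreeAlgebra.ι K (Sum.inl j) * FreeAlgebra.ι K (Sum.inr i) + if i = j then 1 else 0)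

/-- The `n`-th Weyl algebra over `K`. -/
abbrev WeylAlgebra (K : Type) [Field K] (n : ℕ) : Type := RingQuot (WeylRel K n)

/-- The variable `X_i` (degree `+1`) in the Weyl algebra. -/
noncomputable def Wx (K : Type) [Field K] {n : ℕ} (i : Fin n) : WeylAlgebra K n :=
  RingQuot.mkAlgHom K (WeylRel K n) (FreeAlgebra.ι K (Sum.inl i))

/-- The partial derivative `∂_i` (degree `-1`) in the Weyl algebra. -/
noncomputable def Wd (K : Type) [Field K] {n : ℕ} (i : Fin n) : WeylAlgebra K n :=
  RingQuot.mkAlgHom K (WeylRel K n) (FreeAlgebra.ι K (Sum.inr i))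

/-- The Euler operator `ℰ_n = ∑ X_i ∂_i`. -/
noncomputable def weylEuler (K : Type) [Field K] (n : ℕ) : WeylAlgebra K n :=
  ∑ i : Fin n, Wx K i * Wd K i

/-- The Euler operator `ℰ_r = ∑_{i < r} X_i ∂_i` of the subalgebra `A_r(K) ⊆ A_n(K)`. -/
noncomputable def weylEulerUpTo (K : Type) [Field K] (n r : ℕ) : WeylAlgebra K n :=
  ∑ i ∈ Finset.univ.filter (fun i : Fin n => (i : ℕ) < r), Wx K i * Wd K i

/-- Monomials of degree `d` in the variables `X_1, …, X_n` inside the Weyl algebra. -/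
def xMonomials (K : Type) [Field K] (n d : ℕ) : Set (WeylAlgebra K n) :=
  {w | ∃ l : List (Fin n), l.length = d ∧ w = (l.map (Wx K)).prod}

/-- `f` is a homogeneous polynomial of degree `d` in `R = K[X_1, …, X_n] ⊆ A_n(K)`. -/
def IsHomogPoly (K : Type) [Field K] {n : ℕ} (f : WeylAlgebra K n) (d : ℕ) : Prop :=
  f ∈ Submodule.span K (xMonomials K n d)

/-! ### Graded (left) modules over the Weyl algebra. -/

/-- A graded left `A_n(K)`-module: a module over the Weyl algebra together with an internal
`ℤ`-grading, stable under `K` and such that `X_i` raises degree by one and `∂_i` lowers it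
by one. -/
structure GWM (K : Type) [Field K] (n : ℕ) where
  carrier : Type
  [acg : AddCommGroup carrier]
  [mod : Module (WeylAlgebra K n) carrier]
  deg : ℤ → AddSubgroup carrier
  isInternal : DirectSum.IsInternal deg
  k_smul : ∀ (c : K) (j : ℤ) (m : carrier), m ∈ deg j →
    algebraMap K (WeylAlgebra K n) c • m ∈ deg j
  x_smul : ∀ (i : Fin n) (j : ℤ) (m : carrier), m ∈ deg j → Wx K i • m ∈ deg (j + 1)
  d_smul : ∀ (i : Fin n) (j : ℤ) (m : carrier), m ∈ deg j → Wd K i • m ∈ deg (j - 1)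

attribute [instance] GWM.acg GWM.mod

instance {K : Type} [Field K] {n : ℕ} : CoeSort (GWM K n) Type := ⟨GWM.carrier⟩

/-- A graded `A_n(K)`-module is *generalized Eulerian* if every homogeneous element `z`
is killed by some power of `ℰ_n - |z|`. -/
def GWM.IsGenEulerian {K : Type} [Field K] {n : ℕ} (M : GWM K n) : Prop :=
  ∀ (j : ℤ) (m : M.carrier), m ∈ M.deg j →
    ∃ a : ℕ, 1 ≤ a ∧ ((weylEuler K n - (j : WeylAlgebra K n)) ^ a) • m = 0

/-- A graded module is concentrated in degree `d` if all other graded pieces vanish. -/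
def GWM.ConcentratedIn {K : Type} [Field K] {n : ℕ} (M : GWM K n) (d : ℤ) : Prop :=
  ∀ j : ℤ, j ≠ d → M.deg j = ⊥

/-!
Write `ℰ_n = ℰ_{n-1} + X_n ∂_n`, where `ℰ_{n-1}` commutes with `X_n`. Hence the powers of
`ℰ_{n-1} - j` and of `ℰ_n - j` agree modulo `X_n A_n(K)`, which gives the claim for
`H_0(X_n; M)`. On `ker X_n` the relation `∂_n X_n = X_n ∂_n + 1` makes `X_n ∂_n` act as `-1`,
so `ℰ_{n-1} - j` acts on this `ℰ_{n-1}`-stable subgroup as `ℰ_n - (j - 1)`, which gives the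
claim for `H_1(X_n; M)`.
-/

theorem pow_smul_eq_pow_smul_of_smul_eq {A M : Type*} [Monoid A] [MulAction A M] {a b : A}
    {N : Set M} (hN : ∀ w ∈ N, b • w ∈ N) (hab : ∀ w ∈ N, a • w = b • w) (k : ℕ) :
    ∀ w ∈ N, a ^ k • w = b ^ k • w := by
  induction k with
  | zero => simp
  | succ k ih =>
    intro w hw
    rw [pow_succ, pow_succ, mul_smul, mul_smul, hab w hw, ih _ (hN w hw)]

theorem exists_sub_mul_pow_eq_pow_add_mul {A : Type*} [Ring A] {a x y : A}
    (hx : Commute (a - x * y) x) (k : ℕ) : ∃ c, (a - x * y) ^ k = a ^ k + x * c := by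
  induction k with
  | zero => exact ⟨0, by simp⟩
  | succ k ih =>
    obtain ⟨c, hc⟩ := ih
    refine ⟨(a - x * y) * c - y * a ^ k, ?_⟩
    calc (a - x * y) ^ (k + 1) = (a - x * y) * (a ^ k + x * c) := by rw [pow_succ', hc]
      _ = a ^ (k + 1) - x * (y * a ^ k) + (a - x * y) * x * c := by
          rw [mul_add, sub_mul, pow_succ', mul_assoc, mul_assoc]
      _ = a ^ (k + 1) + x * ((a - x * y) * c - y * a ^ k) := by
          rw [hx.eq, mul_assoc, mul_sub]; abel

section WeylAlgebra

variable {K : Type} [Field K] {n : ℕ}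

theorem Wx_mul_Wx (i j : Fin n) : Wx K i * Wx K j = Wx K j * Wx K i := by
  simpa only [Wx, map_mul] using RingQuot.mkAlgHom_rel K (WeylRel.xx (K := K) i j)

theorem Wd_mul_Wx (i j : Fin n) :
    Wd K i * Wx K j = Wx K j * Wd K i + if i = j then 1 else 0 := by
  have h := RingQuot.mkAlgHom_rel K (WeylRel.dx (K := K) i j)
  split_ifs at h ⊢ <;> simpa only [Wd, Wx, map_mul, map_add, map_one, map_zero] using h

theorem commute_weylEulerUpTo_Wx {r : ℕ} {i : Fin n} (hi : r ≤ i) :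
    Commute (weylEulerUpTo K n r) (Wx K i) := by
  refine Commute.sum_left _ _ _ fun k hk => Commute.mul_left (Wx_mul_Wx k i) ?_
  have hki : k ≠ i := by rintro rfl; simp only [Finset.mem_filter] at hk; omega
  have h := Wd_mul_Wx (K := K) k i
  rwa [if_neg hki, add_zero] at h

theorem weylEuler_eq_weylEulerUpTo_add {i : Fin n} (hi : (i : ℕ) + 1 = n) :
    weylEuler K n = weylEulerUpTo K n i + Wx K i * Wd K i := by
  have hlast : Finset.univ.filter (fun k : Fin n => ¬ (k : ℕ) < i) = {i} := by
    ext k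
    simp only [Finset.mem_filter, Finset.mem_univ, true_and, Finset.mem_singleton, Fin.ext_iff]
    omega
  rw [weylEuler, weylEulerUpTo,
    ← Finset.sum_filter_add_sum_filter_not _ (fun k : Fin n => (k : ℕ) < i), hlast,
    Finset.sum_singleton]

variable {M : Type*} [AddCommGroup M] [Module (WeylAlgebra K n) M]

theorem Wx_mul_Wd_smul_of_Wx_smul_eq_zero {i : Fin n} {z : M} (hz : Wx K i • z = 0) :
    (Wx K i * Wd K i) • z = -z := by
  have h : (Wd K i * Wx K i) • z = 0 := by rw [mul_smul, hz, smul_zero]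
  rw [Wd_mul_Wx, if_pos rfl, add_smul, one_smul] at h
  exact eq_neg_of_add_eq_zero_left h

theorem weylEuler_sub_pow_smul_of_Wx_smul_eq_zero {i : Fin n} (hi : (i : ℕ) + 1 = n) (j : ℤ)
    (a : ℕ) {z : M} (hz : Wx K i • z = 0) :
    ((weylEuler K n - ((j - 1 : ℤ) : WeylAlgebra K n)) ^ a) • z =
      ((weylEulerUpTo K n i - (j : WeylAlgebra K n)) ^ a) • z := by
  have hcomm : Commute (weylEulerUpTo K n i - (j : WeylAlgebra K n)) (Wx K i) :=
    (commute_weylEulerUpTo_Wx le_rfl).sub_left (Int.cast_commute j _)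
  refine pow_smul_eq_pow_smul_of_smul_eq (N := {w | Wx K i • w = 0}) (fun w hw => ?_)
    (fun w hw => ?_) a z hz
  · change Wx K i • _ = 0
    rw [← mul_smul, ← hcomm.eq, mul_smul, (hw : Wx K i • w = 0), smul_zero]
  · have hE : weylEuler K n - ((j - 1 : ℤ) : WeylAlgebra K n) =
        weylEulerUpTo K n i - j + (Wx K i * Wd K i + 1) := by
      rw [weylEuler_eq_weylEulerUpTo_add hi]; push_cast; abel
    rw [hE, add_smul, add_smul, Wx_mul_Wd_smul_of_Wx_smul_eq_zero hw, one_smul, neg_add_cancel,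
      add_zero]

theorem exists_weylEulerUpTo_sub_pow_eq {i : Fin n} (hi : (i : ℕ) + 1 = n) (j : ℤ) (a : ℕ) :
    ∃ c, (weylEulerUpTo K n i - (j : WeylAlgebra K n)) ^ a =
      (weylEuler K n - (j : WeylAlgebra K n)) ^ a + Wx K i * c := by
  have hE : weylEulerUpTo K n i - (j : WeylAlgebra K n) =
      weylEuler K n - j - Wx K i * Wd K i := by
    rw [weylEuler_eq_weylEulerUpTo_add hi]; abel
  rw [hE]
  refine exists_sub_mul_pow_eq_pow_add_mul ?_ a
  rw [← hE]
  exact (commute_weylEulerUpTo_Wx le_rfl).sub_left (Int.cast_commute j _)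

end WeylAlgebra

/-- Let `M` be a generalized Eulerian `A_n(K)`-module.  Then
`H_1(X_n; M)` (the kernel of multiplication by `X_n` on `M(-1)`) and
`H_0(X_n; M) = M/X_nM` are generalized Eulerian `A_{n-1}(K)`-modules: for every
homogeneous element of degree `j` of either, some power of `ℰ_{n-1} - j` kills it (in the
quotient, for `H_0`). -/
theorem koszul_Xn_is_generalizedEulerian
    (K : Type) [Field K] (n : ℕ) (hn : 0 < n)
    (M : GWM K n) (hM : M.IsGenEulerian) :
    (∀ (j : ℤ) (z : M.carrier), z ∈ M.deg (j - 1) → Wx K (⟨n - 1, by omega⟩ : Fin n) • z = 0 →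
      ∃ a : ℕ, 1 ≤ a ∧
        ((weylEulerUpTo K n (n - 1) - (j : WeylAlgebra K n)) ^ a) • z = 0) ∧
    (∀ (j : ℤ) (m : M.carrier), m ∈ M.deg j →
      ∃ a : ℕ, 1 ≤ a ∧ ∃ m' : M.carrier,
        ((weylEulerUpTo K n (n - 1) - (j : WeylAlgebra K n)) ^ a) • m =
          Wx K (⟨n - 1, by omega⟩ : Fin n) • m') := by
  have hi : ((⟨n - 1, by omega⟩ : Fin n) : ℕ) + 1 = n := Nat.sub_add_cancel hn
  refine ⟨fun j z hz hxz => ?_, fun j m hm => ?_⟩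
  · obtain ⟨a, ha, hkill⟩ := hM (j - 1) z hz
    exact ⟨a, ha, (weylEuler_sub_pow_smul_of_Wx_smul_eq_zero hi j a hxz).symm.trans hkill⟩
  · obtain ⟨a, ha, hkill⟩ := hM j m hm
    obtain ⟨c, hc⟩ := exists_weylEulerUpTo_sub_pow_eq (K := K) hi j a
    exact ⟨a, ha, c • m, by rw [hc, add_smul, hkill, zero_add, mul_smul]⟩
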